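/- arXiv:1409.4132 — 3 statements merged into one kernel-verified Lean document; each statement's English description precedes it below -/
import Mathlib

section
/- In the truth-biased model with lexicographic tie-breaking, the truthful ballot vector a is a PNE if and only if neither of the following holds: (1) |W(a)| > 1 and there is a candidate c_k ∈ W(a) and a voter i with a_i ≠ c_k who prefers c_k to the lexicographic winner c_j of W(a); (2) H(a) ≠ ∅ and there is a candidate c_k ∈ H(a) with k < j and a voter i with a_i ≠ c_k who prefers c_k to c_j. -/
open Finset

/-- A ballot vector: each voter either abstains (`none`) or votes for a candidate. -/
abbrev Ballot (n m : ℕ) := Fin n → Option (Fin m)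

/-- The plurality score of candidate `c` under ballot vector `b`. -/
def sc {n m : ℕ} (b : Ballot n m) (c : Fin m) : ℕ :=
  (univ.filter fun i => b i = some c).card

/-- The maximum plurality score. -/
def maxScore {n m : ℕ} (b : Ballot n m) : ℕ :=
  univ.sup fun c : Fin m => sc b c

/-- The winning set `W(b)`: candidates with maximum score. -/
def winSet {n m : ℕ} (b : Ballot n m) : Finset (Fin m) :=
  univ.filter fun c => sc b c = maxScore b

/-- `H(b)`: candidates whose score is the maximum minus one. -/
def Hset {n m : ℕ} (b : Ballot n m) : Finset (Fin m) :=
  univ.filter fun c => sc b c + 1 = maxScore b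

/-- `H'(b)`: candidates whose score is the maximum minus two. -/
def H'set {n m : ℕ} (b : Ballot n m) : Finset (Fin m) :=
  univ.filter fun c => sc b c + 2 = maxScore b

/-- `c` is the winner under lexicographic tie-breaking: the minimum-index member of `W(b)`. -/
def IsLexWin {n m : ℕ} (b : Ballot n m) (c : Fin m) : Prop :=
  c ∈ winSet b ∧ ∀ c' ∈ winSet b, (c : ℕ) ≤ (c' : ℕ)

/-- The (degenerate) lottery induced by lexicographic tie-breaking. -/
def pLex {n m : ℕ} (b : Ballot n m) : Fin m → ℚ := fun c =>
  if c ∈ winSet b ∧ ∀ c' ∈ winSet b, (c : ℕ) ≤ (c' : ℕ) then 1 else 0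

/-- The lottery induced by random-candidate tie-breaking: uniform over `W(b)`. -/
def pRC {n m : ℕ} (b : Ballot n m) : Fin m → ℚ := fun c =>
  if c ∈ winSet b then ((winSet b).card : ℚ)⁻¹ else 0

/-- The lottery induced by random-voter tie-breaking: a uniformly random voter's
favourite member of `W(b)` is elected. -/
def pRV {n m : ℕ} (u : Fin n → Fin m → ℕ) (b : Ballot n m) : Fin m → ℚ := fun c =>
  ((univ.filter fun i : Fin n =>
      c ∈ winSet b ∧ ∀ c' ∈ winSet b, u i c' ≤ u i c).card : ℚ) / (n : ℚ)

/-- Expected utility of a lottery `p` for a voter with utility function `ui`. -/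
def EU {m : ℕ} (ui : Fin m → ℕ) (p : Fin m → ℚ) : ℚ := ∑ c, p c * (ui c : ℚ)

/-- Payoff of lazy voter `i`: expected utility plus a bonus `ε` for abstaining. -/
def lazyU {n m : ℕ} (p : Ballot n m → Fin m → ℚ) (u : Fin n → Fin m → ℕ)
    (ε : ℚ) (i : Fin n) (b : Ballot n m) : ℚ :=
  EU (u i) (p b) + if b i = none then ε else 0

/-- Pure Nash equilibrium of the lazy-voter game. -/
def lazyPNE {n m : ℕ} (p : Ballot n m → Fin m → ℚ) (u : Fin n → Fin m → ℕ)
    (ε : ℚ) (b : Ballot n m) : Prop :=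
  ∀ (i : Fin n) (b' : Option (Fin m)),
    lazyU p u ε i (Function.update b i b') ≤ lazyU p u ε i b

/-- View a non-abstaining (truth-biased) ballot vector as a general ballot vector. -/
def tv {n m : ℕ} (b : Fin n → Fin m) : Ballot n m := fun i => some (b i)

/-- Payoff of truth-biased voter `i`: expected utility plus a bonus `ε` for voting
truthfully (abstention, which would yield `-∞`, is never used). -/
def tbU {n m : ℕ} (p : Ballot n m → Fin m → ℚ) (u : Fin n → Fin m → ℕ)
    (a : Fin n → Fin m) (ε : ℚ) (i : Fin n) (b : Fin n → Fin m) : ℚ :=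
  EU (u i) (p (tv b)) + if b i = a i then ε else 0

/-- Pure Nash equilibrium of the truth-biased game. -/
def tbPNE {n m : ℕ} (p : Ballot n m → Fin m → ℚ) (u : Fin n → Fin m → ℕ)
    (a : Fin n → Fin m) (ε : ℚ) (b : Fin n → Fin m) : Prop :=
  ∀ (i : Fin n) (b' : Fin m),
    tbU p u a ε i (Function.update b i b') ≤ tbU p u a ε i b



section Helpers

variable {n m : ℕ}

lemma sc_update_self (a : Fin n → Fin m) (i : Fin n) (b' : Fin m) (h : b' ≠ a i) :
    sc (tv (Function.update a i b')) (a i) + 1 = sc (tv a) (a i) := by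
  unfold sc tv
  have hset : (univ.filter fun j => some (Function.update a i b' j) = some (a i)) =
      (univ.filter fun j => some (a j) = some (a i)).erase i := by
    ext j
    by_cases hj : j = i
    · subst hj; simp [Function.update_self, h]
    · simp [Function.update_of_ne hj, hj]
  rw [hset, Finset.card_erase_add_one (by simp)]

lemma sc_update_target (a : Fin n → Fin m) (i : Fin n) (b' : Fin m) (h : b' ≠ a i) :
    sc (tv (Function.update a i b')) b' = sc (tv a) b' + 1 := by
  unfold sc tv
  have hset : (univ.filter fun j => some (Function.update a i b' j) = some b') =
      insert i (univ.filter fun j => some (a j) = some b') := by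
    ext j
    by_cases hj : j = i
    · subst hj; simp [Function.update_self]
    · simp [Function.update_of_ne hj, hj]
  have hni : i ∉ univ.filter fun j => some (a j) = some b' := by
    simp only [mem_filter, Option.some.injEq]
    exact fun hx => h hx.2.symm
  rw [hset, Finset.card_insert_of_notMem hni]

lemma sc_update_other (a : Fin n → Fin m) (i : Fin n) (b' : Fin m) (c : Fin m)
    (h1 : c ≠ a i) (h2 : c ≠ b') :
    sc (tv (Function.update a i b')) c = sc (tv a) c := by
  unfold sc tv
  congr 1
  apply Finset.filter_congr
  intro j _
  by_cases hj : j = i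
  · subst hj
    simp only [Function.update_self, Option.some.injEq]
    exact iff_of_false (fun e => h2 e.symm) (fun e => h1 e.symm)
  · simp [Function.update_of_ne hj]

lemma sc_le_max (b : Ballot n m) (c : Fin m) : sc b c ≤ maxScore b :=
  Finset.le_sup (mem_univ c)

lemma exists_isLexWin (hm : 0 < m) (b : Ballot n m) : ∃ c, IsLexWin b c := by
  have : (winSet b).Nonempty := by
    haveI : Nonempty (Fin m) := ⟨⟨0, hm⟩⟩
    obtain ⟨c, _, hc⟩ := Finset.exists_mem_eq_sup univ univ_nonempty (fun c => sc b c)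
    exact ⟨c, mem_filter.mpr ⟨mem_univ c, hc.symm⟩⟩
  refine ⟨(winSet b).min' this, (winSet b).min'_mem this, fun c' hc' => ?_⟩
  exact Finset.min'_le _ _ hc'

lemma isLexWin_unique {b : Ballot n m} {c c' : Fin m}
    (h : IsLexWin b c) (h' : IsLexWin b c') : c = c' :=
  Fin.ext (le_antisymm (h.2 c' h'.1) (h'.2 c h.1))

lemma EU_pLex_eq {b : Ballot n m} {c : Fin m} (hc : IsLexWin b c) (ui : Fin m → ℕ) :
    EU ui (pLex b) = ui c := by
  unfold EU pLex
  rw [Finset.sum_eq_single c]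
  · rw [if_pos ⟨hc.1, hc.2⟩, one_mul]
  · intro c' _ hne
    rw [if_neg fun hP => hne (isLexWin_unique ⟨hP.1, hP.2⟩ hc), zero_mul]
  · intro hc'; exact absurd (mem_univ c) hc'

end Helpers


section Dev

variable {n m : ℕ}

lemma dev1 (a : Fin n → Fin m) (i : Fin n) (ck : Fin m) (hne : a i ≠ ck)
    (hW : ck ∈ winSet (tv a)) : IsLexWin (tv (Function.update a i ck)) ck := by
  have hck : sc (tv a) ck = maxScore (tv a) := (mem_filter.mp hW).2
  have hne' : ck ≠ a i := Ne.symm hne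
  have ht : sc (tv (Function.update a i ck)) ck = maxScore (tv a) + 1 := by
    rw [sc_update_target a i ck hne', hck]
  have hmax : maxScore (tv (Function.update a i ck)) = maxScore (tv a) + 1 := by
    apply le_antisymm
    · apply Finset.sup_le; intro c _
      by_cases h1 : c = ck
      · subst h1; omega
      · by_cases h2 : c = a i
        · subst h2
          have h3 := sc_update_self a i ck hne'
          have h4 := sc_le_max (tv a) (a i)
          omega
        · rw [sc_update_other a i ck c h2 h1]
          have h4 := sc_le_max (tv a) c
          omega
    · rw [← ht]; exact sc_le_max _ ck
  refine ⟨mem_filter.mpr ⟨mem_univ _, by rw [ht, hmax]⟩, fun c' hc' => ?_⟩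
  have hsc' := (mem_filter.mp hc').2
  by_cases h1 : c' = ck
  · subst h1; exact le_refl _
  · exfalso
    rw [hmax] at hsc'
    by_cases h2 : c' = a i
    · subst h2
      have h3 := sc_update_self a i ck hne'
      have h4 := sc_le_max (tv a) (a i)
      omega
    · rw [sc_update_other a i ck c' h2 h1] at hsc'
      have h4 := sc_le_max (tv a) c'
      omega

lemma dev2 (a : Fin n → Fin m) (i : Fin n) (ck : Fin m) (hne : a i ≠ ck)
    (hH : sc (tv a) ck + 1 = maxScore (tv a))
    (hlt : ∀ c' ∈ winSet (tv a), (ck : ℕ) < (c' : ℕ)) :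
    IsLexWin (tv (Function.update a i ck)) ck := by
  have hne' : ck ≠ a i := Ne.symm hne
  have ht : sc (tv (Function.update a i ck)) ck = maxScore (tv a) := by
    rw [sc_update_target a i ck hne']; omega
  have hmax : maxScore (tv (Function.update a i ck)) = maxScore (tv a) := by
    apply le_antisymm
    · apply Finset.sup_le; intro c _
      by_cases h1 : c = ck
      · subst h1; omega
      · by_cases h2 : c = a i
        · subst h2
          have h3 := sc_update_self a i ck hne'
          have h4 := sc_le_max (tv a) (a i)
          omega
        · rw [sc_update_other a i ck c h2 h1]
          exact sc_le_max (tv a) c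
    · rw [← ht]; exact sc_le_max _ ck
  refine ⟨mem_filter.mpr ⟨mem_univ _, by rw [ht, hmax]⟩, fun c' hc' => ?_⟩
  have hsc' := (mem_filter.mp hc').2
  by_cases h1 : c' = ck
  · subst h1; exact le_refl _
  · rw [hmax] at hsc'
    by_cases h2 : c' = a i
    · exfalso
      subst h2
      have h3 := sc_update_self a i ck hne'
      have h4 := sc_le_max (tv a) (a i)
      omega
    · rw [sc_update_other a i ck c' h2 h1] at hsc'
      exact le_of_lt (hlt c' (mem_filter.mpr ⟨mem_univ _, hsc'⟩))

end Dev

theorem stmt9 {n m : ℕ} (hn : 0 < n) (hm : 0 < m)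
    (u : Fin n → Fin m → ℕ) (hu : ∀ i, Function.Injective (u i))
    (ε : ℚ) (hε0 : 0 < ε) (hε : ε < min ((m : ℚ)⁻¹) ((n : ℚ)⁻¹))
    (a : Fin n → Fin m) (ha : ∀ i c, u i c ≤ u i (a i))
    (cj : Fin m) (hcj : IsLexWin (tv a) cj) :
    tbPNE pLex u a ε a ↔
      ¬ ((1 < (winSet (tv a)).card ∧
            ∃ ck ∈ winSet (tv a), ∃ i, a i ≠ ck ∧ u i cj < u i ck) ∨
         ((Hset (tv a)).Nonempty ∧
            ∃ ck ∈ Hset (tv a), (ck : ℕ) < (cj : ℕ) ∧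
              ∃ i, a i ≠ ck ∧ u i cj < u i ck)) := by
  have hε1 : ε < 1 := by
    have h1 : (1 : ℚ) ≤ (m : ℚ) := by exact_mod_cast hm
    exact lt_of_lt_of_le hε (le_trans (min_le_left _ _) (inv_le_one_of_one_le₀ h1))
  constructor
  · intro hPNE
    rintro (⟨-, ck, hckW, i, hne, hpref⟩ | ⟨-, ck, hckH, hklt, i, hne, hpref⟩)
    · have hlw := dev1 a i ck hne hckW
      have hle := hPNE i ck
      have e1 : tbU pLex u a ε i (Function.update a i ck) = (u i ck : ℚ) := by
        unfold tbU
        rw [EU_pLex_eq hlw, Function.update_self, if_neg (Ne.symm hne), add_zero]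
      have e2 : tbU pLex u a ε i a = (u i cj : ℚ) + ε := by
        unfold tbU; rw [EU_pLex_eq hcj, if_pos rfl]
      rw [e1, e2] at hle
      have hc : (u i cj : ℚ) + 1 ≤ (u i ck : ℚ) := by exact_mod_cast hpref
      linarith
    · have hlw := dev2 a i ck hne (mem_filter.mp hckH).2
        (fun c' hc' => lt_of_lt_of_le hklt (hcj.2 c' hc'))
      have hle := hPNE i ck
      have e1 : tbU pLex u a ε i (Function.update a i ck) = (u i ck : ℚ) := by
        unfold tbU
        rw [EU_pLex_eq hlw, Function.update_self, if_neg (Ne.symm hne), add_zero]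
      have e2 : tbU pLex u a ε i a = (u i cj : ℚ) + ε := by
        unfold tbU; rw [EU_pLex_eq hcj, if_pos rfl]
      rw [e1, e2] at hle
      have hc : (u i cj : ℚ) + 1 ≤ (u i ck : ℚ) := by exact_mod_cast hpref
      linarith
  · intro hnc i b'
    by_contra hgt
    push_neg at hgt
    by_cases hb : b' = a i
    · subst hb
      rw [Function.update_eq_self] at hgt
      exact lt_irrefl _ hgt
    obtain ⟨w, hw⟩ := exists_isLexWin hm (tv (Function.update a i b'))
    have e1 : tbU pLex u a ε i (Function.update a i b') = (u i w : ℚ) := by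
      unfold tbU
      rw [EU_pLex_eq hw, Function.update_self, if_neg hb, add_zero]
    have e2 : tbU pLex u a ε i a = (u i cj : ℚ) + ε := by
      unfold tbU; rw [EU_pLex_eq hcj, if_pos rfl]
    rw [e1, e2] at hgt
    have hpref : u i cj < u i w := by
      have : (u i cj : ℚ) < (u i w : ℚ) := by linarith
      exact_mod_cast this
    have hcja : cj ≠ a i := by
      intro e
      rw [e] at hpref
      exact absurd (ha i w) (not_le.mpr hpref)
    have hwcj : w ≠ cj := fun e => lt_irrefl _ (e ▸ hpref)
    have hbcj : b' ≠ cj := by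
      intro e; subst e
      exact hwcj (isLexWin_unique hw (dev1 a i b' (fun h => hb h.symm) hcj.1))
    have hM : sc (tv a) cj = maxScore (tv a) := (mem_filter.mp hcj.1).2
    have hwin : sc (tv (Function.update a i b')) cj = maxScore (tv a) := by
      rw [sc_update_other a i b' cj hcja (Ne.symm hbcj)]; exact hM
    have hmaxge : maxScore (tv a) ≤ maxScore (tv (Function.update a i b')) :=
      hwin ▸ sc_le_max _ cj
    have hwmax : sc (tv (Function.update a i b')) w
        = maxScore (tv (Function.update a i b')) := (mem_filter.mp hw.1).2
    have hwne_ai : w ≠ a i := by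
      intro e
      rw [e] at hwmax
      have h1 := sc_update_self a i b' hb
      have h2 := sc_le_max (tv a) (a i)
      omega
    have hwb : w = b' := by
      by_contra hwb
      have h1 : sc (tv (Function.update a i b')) w = sc (tv a) w :=
        sc_update_other a i b' w hwne_ai hwb
      have h3 := sc_le_max (tv a) w
      have h4 : sc (tv a) w = maxScore (tv a) := by omega
      have h5 : (cj : ℕ) ≤ (w : ℕ) := hcj.2 w (mem_filter.mpr ⟨mem_univ _, h4⟩)
      have h6 : maxScore (tv (Function.update a i b')) = maxScore (tv a) := by omega
      have h7 : cj ∈ winSet (tv (Function.update a i b')) :=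
        mem_filter.mpr ⟨mem_univ _, by rw [hwin, h6]⟩
      exact hwcj (Fin.ext (le_antisymm (hw.2 cj h7) h5))
    subst hwb
    have hsct := sc_update_target a i w hb
    have h3 := sc_le_max (tv a) w
    by_cases hc : sc (tv a) w = maxScore (tv a)
    · apply hnc; left
      have hmem : w ∈ winSet (tv a) := mem_filter.mpr ⟨mem_univ _, hc⟩
      exact ⟨Finset.one_lt_card.mpr ⟨cj, hcj.1, w, hmem, Ne.symm hbcj⟩,
        w, hmem, i, fun e => hb e.symm, hpref⟩
    · have hH : sc (tv a) w + 1 = maxScore (tv a) := by omega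
      have hmax' : maxScore (tv (Function.update a i w)) = maxScore (tv a) := by omega
      have h7 : cj ∈ winSet (tv (Function.update a i w)) :=
        mem_filter.mpr ⟨mem_univ _, by rw [hwin, hmax']⟩
      have hltv : (w : ℕ) < (cj : ℕ) :=
        lt_of_le_of_ne (hw.2 cj h7) (fun e => hbcj (Fin.ext e))
      have hmem : w ∈ Hset (tv a) := mem_filter.mpr ⟨mem_univ _, hH⟩
      exact hnc (Or.inr ⟨⟨w, hmem⟩, w, hmem, hltv, i, fun e => hb e.symm, hpref⟩)
end

section
/- In the truth-biased model with lexicographic tie-breaking, every non-truthful PNE b has a nonempty set of threshold candidates T(b), and every threshold candidate c_k ∈ T(b) has the same score in b as in the truthful profile a (i.e., all voters whose top choice is c_k vote for c_k in b). -/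
open Finset

/-- The set `T(b)` of threshold candidates with respect to ballot `b` with
lexicographic winner `cj`. -/
def Tset {n m : ℕ} (b : Ballot n m) (cj : Fin m) : Finset (Fin m) :=
  univ.filter fun ck => ck ≠ cj ∧
    (((ck : ℕ) < (cj : ℕ) ∧ sc b ck + 1 = sc b cj) ∨
     ((cj : ℕ) < (ck : ℕ) ∧ sc b ck = sc b cj))

section Helpers

variable {n m : ℕ}

lemma sc_update_eq (b : Fin n → Fin m) (i : Fin n) (x : Fin m) (c : Fin m) :
    sc (tv (Function.update b i x)) c + (if b i = c then 1 else 0)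
      = sc (tv b) c + (if x = c then 1 else 0) := by
  classical
  simp only [sc, Finset.card_filter]
  rw [← Finset.sum_erase_add _ _ (Finset.mem_univ i),
      ← Finset.sum_erase_add _ _ (Finset.mem_univ i)]
  have h : ∀ j ∈ Finset.univ.erase i,
      (if tv (Function.update b i x) j = some c then 1 else 0)
        = (if tv b j = some c then (1:ℕ) else 0) := by
    intro j hj
    simp [tv, Function.update_of_ne (Finset.ne_of_mem_erase hj)]
  rw [Finset.sum_congr rfl h]
  simp only [tv, Function.update_self, Option.some_inj]
  omega

lemma sc_le_of_isLexWin {b : Ballot n m} {c : Fin m} (h : IsLexWin b c) (d : Fin m) :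
    sc b d ≤ sc b c := by
  have hc : sc b c = maxScore b := by
    have := h.1; simpa [winSet] using this
  have : sc b d ≤ maxScore b := Finset.le_sup (Finset.mem_univ d)
  omega

lemma sc_lt_of_isLexWin {b : Ballot n m} {c : Fin m} (h : IsLexWin b c) (d : Fin m)
    (hd : (d : ℕ) < (c : ℕ)) : sc b d < sc b c := by
  rcases lt_or_eq_of_le (sc_le_of_isLexWin h d) with h' | h'
  · exact h'
  · exfalso
    have hc : sc b c = maxScore b := by
      have := h.1; simpa [winSet] using this
    have hdW : d ∈ winSet b := by
      simp [winSet]; omega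
    have := h.2 d hdW
    omega

lemma isLexWin_of {b : Ballot n m} {w : Fin m}
    (h1 : ∀ d, sc b d ≤ sc b w)
    (h2 : ∀ d : Fin m, (d : ℕ) < (w : ℕ) → sc b d < sc b w) : IsLexWin b w := by
  have hw : sc b w = maxScore b := by
    refine le_antisymm (Finset.le_sup (Finset.mem_univ w)) ?_
    exact Finset.sup_le fun d _ => h1 d
  constructor
  · simp [winSet, hw]
  · intro c' hc'
    by_contra hlt
    push_neg at hlt
    have : sc b c' = maxScore b := by simpa [winSet] using hc'
    have := h2 c' hlt
    omega

lemma EU_pLex (ui : Fin m → ℕ) (b : Ballot n m) (c : Fin m) (hc : IsLexWin b c) :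
    EU ui (pLex b) = ui c := by
  classical
  unfold EU pLex
  rw [Finset.sum_eq_single c]
  · have hc' : c ∈ winSet b ∧ ∀ c' ∈ winSet b, (c:ℕ) ≤ (c':ℕ) := hc
    rw [if_pos hc']; ring
  · intro d _ hd
    have h2 : ¬ (d ∈ winSet b ∧ ∀ c' ∈ winSet b, (d:ℕ) ≤ (c':ℕ)) :=
      fun h => hd (isLexWin_unique h hc)
    rw [if_neg h2]; ring
  · intro h; exact absurd (Finset.mem_univ c) h

lemma key_lemma {u : Fin n → Fin m → ℕ} {a b : Fin n → Fin m} {ε : ℚ}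
    (hb : tbPNE pLex u a ε b) (i : Fin n) (hi : b i ≠ a i)
    {cj w : Fin m} (hcj : IsLexWin (tv b) cj)
    (hw : IsLexWin (tv (Function.update b i (a i))) w) :
    (u i w : ℚ) + ε ≤ (u i cj : ℚ) := by
  have := hb i (a i)
  unfold tbU at this
  rw [EU_pLex _ _ _ hw, EU_pLex _ _ _ hcj] at this
  rw [if_pos (by simp [Function.update_self]), if_neg hi] at this
  linarith

end Helpers
section Winners

variable {n m : ℕ}

lemma devWin {b : Fin n → Fin m} {cj : Fin m} (hcj : IsLexWin (tv b) cj)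
    (i : Fin n) (x : Fin m) (hx : x ≠ b i) (hbi : b i ≠ cj) :
    IsLexWin (tv (Function.update b i x)) cj ∨ IsLexWin (tv (Function.update b i x)) x := by
  classical
  have hsx : (sc (tv (Function.update b i x))) x = (sc (tv b)) x + 1 := by
    have h := sc_update_eq b i x x
    rw [if_neg (fun h' => hx h'.symm), if_pos rfl] at h
    omega
  have hsb : (sc (tv (Function.update b i x))) (b i) + 1 = (sc (tv b)) (b i) := by
    have h := sc_update_eq b i x (b i)
    rw [if_pos rfl, if_neg hx] at h
    omega
  have hso : ∀ d, d ≠ x → d ≠ b i → (sc (tv (Function.update b i x))) d = (sc (tv b)) d := by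
    intro d h1 h2
    have h := sc_update_eq b i x d
    rw [if_neg (fun h' => h2 h'.symm), if_neg (fun h' => h1 h'.symm)] at h
    omega
  have hle : ∀ d, (sc (tv b)) d ≤ (sc (tv b)) cj := sc_le_of_isLexWin hcj
  have hlt : ∀ d : Fin m, (d:ℕ) < (cj:ℕ) → (sc (tv b)) d < (sc (tv b)) cj := sc_lt_of_isLexWin hcj
  by_cases hxc : x = cj
  · left
    subst hxc
    refine isLexWin_of (fun d => ?_) (fun d hd => ?_) <;>
    · rcases eq_or_ne d x with rfl | e1
      · omega
      · rcases eq_or_ne d (b i) with rfl | e2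
        · have h2 := hle (b i); omega
        · have h1 := hso d e1 e2
          have h2 := hle d
          omega
  · have hscj : (sc (tv (Function.update b i x))) cj = (sc (tv b)) cj := hso cj (fun h => hxc h.symm) (fun h => hbi h.symm)
    have hxne : (x:ℕ) ≠ (cj:ℕ) := fun h => hxc (Fin.ext h)
    rcases lt_or_gt_of_ne hxne with hpos | hpos
    · -- x < cj
      have hx4 := hlt x hpos
      by_cases hq : (sc (tv (Function.update b i x))) x = (sc (tv b)) cj
      · right
        refine isLexWin_of (fun d => ?_) (fun d hd => ?_) <;>
        · rcases eq_or_ne d x with rfl | e1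
          · omega
          · rcases eq_or_ne d (b i) with rfl | e2
            · have h2 := hle (b i); omega
            · have h1 := hso d e1 e2
              have h2 := hle d
              rcases lt_or_ge (d:ℕ) (cj:ℕ) with h3 | h3
              · have h4 := hlt d h3; omega
              · omega
      · left
        refine isLexWin_of (fun d => ?_) (fun d hd => ?_) <;>
        · rcases eq_or_ne d x with rfl | e1
          · omega
          · rcases eq_or_ne d (b i) with rfl | e2
            · have h2 := hle (b i); omega
            · have h1 := hso d e1 e2
              have h2 := hle d
              rcases lt_or_ge (d:ℕ) (cj:ℕ) with h3 | h3
              · have h4 := hlt d h3; omega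
              · omega
    · -- cj < x
      have hx4 := hle x
      by_cases hq : (sc (tv (Function.update b i x))) x = (sc (tv b)) cj + 1
      · right
        refine isLexWin_of (fun d => ?_) (fun d hd => ?_) <;>
        · rcases eq_or_ne d x with rfl | e1
          · omega
          · rcases eq_or_ne d (b i) with rfl | e2
            · have h2 := hle (b i); omega
            · have h1 := hso d e1 e2
              have h2 := hle d
              omega
      · left
        refine isLexWin_of (fun d => ?_) (fun d hd => ?_) <;>
        · rcases eq_or_ne d x with rfl | e1
          · omega
          · rcases eq_or_ne d (b i) with rfl | e2
            · have h2 := hle (b i); omega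
            · have h1 := hso d e1 e2
              have h2 := hle d
              rcases lt_or_ge (d:ℕ) (cj:ℕ) with h3 | h3
              · have h4 := hlt d h3; omega
              · omega

lemma devWin2 {b : Fin n → Fin m} {cj : Fin m} (hcj : IsLexWin (tv b) cj)
    (i : Fin n) (x : Fin m) (hx : x ≠ b i) (hbi : b i = cj)
    (hT : ∀ d : Fin m, d ≠ cj →
      ((d:ℕ) < (cj:ℕ) → sc (tv b) d + 2 ≤ sc (tv b) cj) ∧
      ((cj:ℕ) < (d:ℕ) → sc (tv b) d + 1 ≤ sc (tv b) cj)) :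
    IsLexWin (tv (Function.update b i x)) cj ∨ IsLexWin (tv (Function.update b i x)) x := by
  classical
  have hsx : (sc (tv (Function.update b i x))) x = (sc (tv b)) x + 1 := by
    have h := sc_update_eq b i x x
    rw [if_neg (fun h' => hx h'.symm), if_pos rfl] at h
    omega
  have hsb : (sc (tv (Function.update b i x))) (b i) + 1 = (sc (tv b)) (b i) := by
    have h := sc_update_eq b i x (b i)
    rw [if_pos rfl, if_neg hx] at h
    omega
  have hso : ∀ d, d ≠ x → d ≠ b i → (sc (tv (Function.update b i x))) d = (sc (tv b)) d := by
    intro d h1 h2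
    have h := sc_update_eq b i x d
    rw [if_neg (fun h' => h2 h'.symm), if_neg (fun h' => h1 h'.symm)] at h
    omega
  subst hbi
  have hxc : x ≠ b i := hx
  have hxne : (x:ℕ) ≠ ((b i):ℕ) := fun h => hxc (Fin.ext h)
  obtain ⟨hT1, hT2⟩ := hT x hxc
  rcases lt_or_gt_of_ne hxne with hpos | hpos
  · -- x < cj = b i
    have hTx := hT1 hpos
    by_cases hq : (sc (tv (Function.update b i x))) x + 1 = (sc (tv b)) (b i)
    · right
      refine isLexWin_of (fun d => ?_) (fun d hd => ?_) <;>
      · rcases eq_or_ne d x with rfl | e1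
        · omega
        · rcases eq_or_ne d (b i) with rfl | e2
          · omega
          · have h1 := hso d e1 e2
            obtain ⟨h4, h5⟩ := hT d e2
            have h6 : (d:ℕ) ≠ ((b i):ℕ) := fun h => e2 (Fin.ext h)
            rcases lt_or_ge (d:ℕ) ((b i):ℕ) with h3 | h3
            · have := h4 h3; omega
            · have := h5 (by omega); omega
    · left
      refine isLexWin_of (fun d => ?_) (fun d hd => ?_) <;>
      · rcases eq_or_ne d x with rfl | e1
        · omega
        · rcases eq_or_ne d (b i) with rfl | e2
          · omega
          · have h1 := hso d e1 e2
            obtain ⟨h4, h5⟩ := hT d e2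
            have h6 : (d:ℕ) ≠ ((b i):ℕ) := fun h => e2 (Fin.ext h)
            rcases lt_or_ge (d:ℕ) ((b i):ℕ) with h3 | h3
            · have := h4 h3; omega
            · have := h5 (by omega); omega
  · -- cj = b i < x
    have hTx := hT2 hpos
    by_cases hq : (sc (tv (Function.update b i x))) x = (sc (tv b)) (b i)
    · right
      refine isLexWin_of (fun d => ?_) (fun d hd => ?_) <;>
      · rcases eq_or_ne d x with rfl | e1
        · omega
        · rcases eq_or_ne d (b i) with rfl | e2
          · omega
          · have h1 := hso d e1 e2
            obtain ⟨h4, h5⟩ := hT d e2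
            have h6 : (d:ℕ) ≠ ((b i):ℕ) := fun h => e2 (Fin.ext h)
            rcases lt_or_ge (d:ℕ) ((b i):ℕ) with h3 | h3
            · have := h4 h3; omega
            · have := h5 (by omega); omega
    · left
      refine isLexWin_of (fun d => ?_) (fun d hd => ?_) <;>
      · rcases eq_or_ne d x with rfl | e1
        · omega
        · rcases eq_or_ne d (b i) with rfl | e2
          · omega
          · have h1 := hso d e1 e2
            obtain ⟨h4, h5⟩ := hT d e2
            have h6 : (d:ℕ) ≠ ((b i):ℕ) := fun h => e2 (Fin.ext h)
            rcases lt_or_ge (d:ℕ) ((b i):ℕ) with h3 | h3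
            · have := h4 h3; omega
            · have := h5 (by omega); omega

lemma devWin3 {b : Fin n → Fin m} {cj ck : Fin m} (hcj : IsLexWin (tv b) cj)
    (hck : ck ≠ cj)
    (hrel : ((ck:ℕ) < (cj:ℕ) ∧ sc (tv b) ck + 1 = sc (tv b) cj) ∨
            ((cj:ℕ) < (ck:ℕ) ∧ sc (tv b) ck = sc (tv b) cj))
    (i : Fin n) (hbi : b i ≠ ck) :
    IsLexWin (tv (Function.update b i ck)) ck := by
  classical
  have hx : ck ≠ b i := fun h => hbi h.symm
  have hsx : (sc (tv (Function.update b i ck))) ck = (sc (tv b)) ck + 1 := by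
    have h := sc_update_eq b i ck ck
    rw [if_neg hbi, if_pos rfl] at h
    omega
  have hsb : (sc (tv (Function.update b i ck))) (b i) + 1 = (sc (tv b)) (b i) := by
    have h := sc_update_eq b i ck (b i)
    rw [if_pos rfl, if_neg hx] at h
    omega
  have hso : ∀ d, d ≠ ck → d ≠ b i → (sc (tv (Function.update b i ck))) d = (sc (tv b)) d := by
    intro d h1 h2
    have h := sc_update_eq b i ck d
    rw [if_neg (fun h' => h2 h'.symm), if_neg (fun h' => h1 h'.symm)] at h
    omega
  have hle : ∀ d, (sc (tv b)) d ≤ (sc (tv b)) cj := sc_le_of_isLexWin hcj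
  have hlt : ∀ d : Fin m, (d:ℕ) < (cj:ℕ) → (sc (tv b)) d < (sc (tv b)) cj := sc_lt_of_isLexWin hcj
  refine isLexWin_of (fun d => ?_) (fun d hd => ?_) <;>
  · rcases eq_or_ne d ck with rfl | e1
    · omega
    · rcases eq_or_ne d (b i) with rfl | e2
      · have h2 := hle (b i); omega
      · have h1 := hso d e1 e2
        have h2 := hle d
        rcases lt_or_ge (d:ℕ) (cj:ℕ) with h3 | h3
        · have h4 := hlt d h3; omega
        · omega

end Winners
theorem stmt10 {n m : ℕ} (hn : 0 < n) (hm : 0 < m)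
    (u : Fin n → Fin m → ℕ) (hu : ∀ i, Function.Injective (u i))
    (ε : ℚ) (hε0 : 0 < ε) (hε : ε < min ((m : ℚ)⁻¹) ((n : ℚ)⁻¹))
    (a : Fin n → Fin m) (ha : ∀ i c, u i c ≤ u i (a i))
    (b : Fin n → Fin m) (hab : b ≠ a) (hb : tbPNE pLex u a ε b)
    (cj : Fin m) (hcj : IsLexWin (tv b) cj) :
    (Tset (tv b) cj).Nonempty ∧
    ∀ ck ∈ Tset (tv b) cj, sc (tv b) ck = sc (tv a) ck := by
  classical
  have key2 : ∀ i : Fin n, b i ≠ a i → ∀ w,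
      IsLexWin (tv (Function.update b i (a i))) w → w ≠ cj ∧ w ≠ a i := by
    intro i hi w hw
    have h := key_lemma hb i hi hcj hw
    constructor
    · rintro rfl; linarith
    · rintro rfl
      have h2 : (u i cj : ℚ) ≤ (u i (a i) : ℚ) := by exact_mod_cast ha i cj
      linarith
  constructor
  · -- T(b) nonempty
    by_contra hT
    rw [Finset.not_nonempty_iff_eq_empty] at hT
    have hT' : ∀ d : Fin m, d ≠ cj →
        ((d:ℕ) < (cj:ℕ) → sc (tv b) d + 2 ≤ sc (tv b) cj) ∧
        ((cj:ℕ) < (d:ℕ) → sc (tv b) d + 1 ≤ sc (tv b) cj) := by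
      intro d hd
      have hmem : d ∉ Tset (tv b) cj := by rw [hT]; exact Finset.notMem_empty d
      rw [Tset, Finset.mem_filter] at hmem
      push_neg at hmem
      have hmem2 := hmem (Finset.mem_univ d) hd
      have h1 := sc_lt_of_isLexWin hcj d
      have h2 := sc_le_of_isLexWin hcj d
      exact ⟨fun h => by have := h1 h; have := hmem2.1 h; omega,
             fun h => by have := hmem2.2 h; omega⟩
    obtain ⟨i, hi⟩ : ∃ i, b i ≠ a i := by
      by_contra h; push_neg at h; exact hab (funext h)
    have hx : a i ≠ b i := fun h => hi h.symm
    by_cases hbi : b i = cj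
    · rcases devWin2 hcj i (a i) hx hbi hT' with hw | hw
      · exact (key2 i hi cj hw).1 rfl
      · exact (key2 i hi _ hw).2 rfl
    · rcases devWin hcj i (a i) hx hbi with hw | hw
      · exact (key2 i hi cj hw).1 rfl
      · exact (key2 i hi _ hw).2 rfl
  · -- threshold candidates keep truthful score
    intro ck hck
    rw [Tset, Finset.mem_filter] at hck
    obtain ⟨-, hckj, hrel⟩ := hck
    have hiff : ∀ i0 : Fin n, b i0 = ck ↔ a i0 = ck := by
      intro i0
      constructor
      · intro hb0
        by_contra ha0
        have hi0 : b i0 ≠ a i0 := by rw [hb0]; exact fun h => ha0 h.symm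
        have hbic : b i0 ≠ cj := by rw [hb0]; exact hckj
        have hx : a i0 ≠ b i0 := fun h => hi0 h.symm
        rcases devWin hcj i0 (a i0) hx hbic with hw | hw
        · exact (key2 i0 hi0 cj hw).1 rfl
        · exact (key2 i0 hi0 _ hw).2 rfl
      · intro ha0
        by_contra hb0
        have hi0 : b i0 ≠ a i0 := by rw [ha0]; exact hb0
        have hw := devWin3 hcj hckj hrel i0 hb0
        rw [← ha0] at hw
        exact (key2 i0 hi0 _ hw).2 rfl
    unfold sc
    congr 1
    apply Finset.filter_congr
    intro i0 _
    simp only [tv, Option.some_inj]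
    simp [hiff i0]
end

section
/- The Balanced Complete Bipartite Subgraph instance (G, k) is a yes-instance if and only if the derived Maximum k-Subset Intersection instance (V_1, (A_j)_{j∈V_2}, k, q=k) is a yes-instance, where A_j = {i ∈ V_1 : (i,j) ∈ E}. -/
open Finset

theorem stmt15 {V1 V2 : Type*} [Fintype V1] [Fintype V2]
    [DecidableEq V1] [DecidableEq V2]
    (E : V1 → V2 → Prop) [∀ i j, Decidable (E i j)] (k : ℕ) (hk : 0 < k) :
    (∃ (S1 : Finset V1) (S2 : Finset V2), S1.card = k ∧ S2.card = k ∧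
        ∀ i ∈ S1, ∀ j ∈ S2, E i j) ↔
      (∃ T : Finset V2, T.card = k ∧
        k ≤ (Finset.univ.filter fun i : V1 => ∀ j ∈ T, E i j).card) := by
  constructor
  · rintro ⟨S1, S2, h1, h2, h⟩
    refine ⟨S2, h2, ?_⟩
    rw [← h1]
    apply Finset.card_le_card
    intro i hi
    simp only [Finset.mem_filter, Finset.mem_univ, true_and]
    exact fun j hj => h i hi j hj
  · rintro ⟨T, hT, hcard⟩
    obtain ⟨S1, hsub, hS1⟩ := Finset.exists_subset_card_eq hcard
    refine ⟨S1, T, hS1, hT, fun i hi j hj => ?_⟩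
    have := hsub hi
    simp only [Finset.mem_filter] at this
    exact this.2 j hj
end
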